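/- For all integers n and k with 0 < k < n − 1, the single-exclusion number satisfies S(n, n−k−1) ≤ ((1 + ln k)/k)·(binom(n,k) − 1), where ln denotes the natural logarithm and binom(n,k) the binomial coefficient. -/

import Mathlib

/-- An `(n,t)`-single-exclusion system: a collection of `t`-subsets (blocks) of an
`n`-set such that every subset `X` with `1 ≤ |X| ≤ t+1` has a block containing all
but exactly one element of `X`. -/
def IsSESystem (n t : ℕ) (S : Finset (Finset (Fin n))) : Prop :=
  (∀ B ∈ S, B.card = t) ∧
  ∀ X : Finset (Fin n), 1 ≤ X.card → X.card ≤ t + 1 → ∃ B ∈ S, (X \ B).card = 1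

/-- The `(n,t)`-single-exclusion number `S(n,t)`: the least number of blocks in an
`(n,t)`-single-exclusion system. -/
noncomputable def SENumber (n t : ℕ) : ℕ :=
  sInf {m : ℕ | ∃ S : Finset (Finset (Fin n)), IsSESystem n t S ∧ S.card = m}

/-!
Pass to complements: if every block of `𝒞` is a `(k+1)`-subset of an `n`-set and every `X` with
`1 ≤ |X| ≤ n - k` meets some block in exactly one point, then `{Cᶜ | C ∈ 𝒞}` is an
`(n, n-k-1)`-SE system. Such families are grown one point at a time: when a point `e` joins the
ground set `G`, add `{e} ∪ D` for every `D` of a covering of the `(k-1)`-subsets of `G` by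
`k`-subsets. The only new sets `X` the old family may miss are those with `|G \ X| = k - 1`, and
these are hit once by `{e} ∪ D` for `D ⊇ G \ X`. The greedy (Lovász–Stein) covering has at most
`binom(m, k-1)/k · (1 + ln k)` blocks, and by Pascal's rule these sizes add up to
`1 + (1 + ln k)/k · (binom(n, k) - k - 1)`.
-/

open Finset Real

lemma sum_Ioc_inv_le_log_sub_log {s N : ℕ} (hs : 0 < s) (hsN : s ≤ N) :
    ∑ i ∈ Ioc s N, (i : ℝ)⁻¹ ≤ log N - log s := by
  induction N, hsN using Nat.le_induction with
  | base => simp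
  | succ N hsN ih =>
    have hN : (0 : ℝ) < N := by exact_mod_cast hs.trans_le hsN
    have hstep : ((N + 1 : ℕ) : ℝ)⁻¹ ≤ log (N + 1 : ℕ) - log N := by
      have := one_sub_inv_le_log_of_pos (x := (N + 1 : ℝ) / N) (by positivity)
      rw [log_div (by positivity) hN.ne', inv_div] at this
      push_cast
      convert this using 1
      field_simp
      ring
    rw [sum_Ioc_succ_top (by omega)]
    linarith

lemma sum_Ioc_min_one_div_le {A k : ℝ} {N : ℕ} (hk : 1 ≤ k) (hN : N ≤ A * k) :
    ∑ i ∈ Ioc 0 N, min 1 (A / i) ≤ A * (1 + log k) := by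
  have hA : 0 ≤ A := nonneg_of_mul_nonneg_left (N.cast_nonneg.trans hN) (by linarith)
  have hlogk : 0 ≤ log k := log_nonneg hk
  have hhead : ∀ m : ℕ, ∑ i ∈ Ioc 0 m, min 1 (A / i) ≤ m := fun m => by
    simpa using sum_le_card_nsmul (Ioc 0 m) _ 1 fun (i : ℕ) _ => min_le_left 1 (A / i)
  set a := ⌊A⌋₊
  obtain hNa | haN := le_or_gt N a
  · calc ∑ i ∈ Ioc 0 N, min 1 (A / i) ≤ N := hhead N
      _ ≤ A := (Nat.cast_le.mpr hNa).trans (Nat.floor_le hA)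
      _ ≤ A * (1 + log k) := le_mul_of_one_le_right hA (by linarith)
  -- Terms with `i ≤ ⌊A⌋` are at most `1`, the later ones are compared with the harmonic tail.
  have ha1 : (0 : ℝ) < a + 1 := by positivity
  have hAa : A < a + 1 := Nat.lt_floor_add_one A
  have hApos : 0 < A := by
    have : (1 : ℝ) ≤ N := by exact_mod_cast (Nat.succ_le_of_lt haN).trans' (by omega)
    nlinarith
  have htail : ∑ i ∈ Ioc a N, min 1 (A / i) ≤ A / (a + 1) + A * (log N - log (a + 1)) := by
    rw [← sum_Ioc_consecutive _ (Nat.le_succ a) haN, Nat.Ioc_succ_singleton, sum_singleton]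
    have := sum_Ioc_inv_le_log_sub_log (Nat.succ_pos a) haN
    push_cast at this ⊢
    gcongr
    · exact min_le_right _ _
    · calc ∑ i ∈ Ioc (a + 1) N, min 1 (A / i) ≤ ∑ i ∈ Ioc (a + 1) N, A * (i : ℝ)⁻¹ :=
            sum_le_sum fun i _ => (min_le_right _ _).trans_eq (div_eq_mul_inv _ _)
        _ ≤ A * (log N - log (a + 1)) := by rw [← mul_sum]; gcongr
  have hlogN : log N ≤ log A + log k := by
    rw [← log_mul hApos.ne' (by positivity)]
    exact log_le_log (by exact_mod_cast (Nat.zero_lt_of_lt haN)) hN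
  have hlogA : log A - log (a + 1) ≤ A / (a + 1) - 1 := by
    rw [← log_div hApos.ne' ha1.ne']
    exact log_le_sub_one_of_pos (by positivity)
  have hquad : (a : ℝ) + A / (a + 1) + A * (A / (a + 1) - 1) ≤ A := by
    have : (a : ℝ) + A / (a + 1) + A * (A / (a + 1) - 1) - A =
        (A - a) * (A - a - 1) / (a + 1) := by
      field_simp; ring
    have : (A - a) * (A - a - 1) / (a + 1) ≤ 0 :=
      div_nonpos_of_nonpos_of_nonneg
        (mul_nonpos_of_nonneg_of_nonpos (by linarith [Nat.floor_le hA]) (by linarith)) ha1.le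
    linarith
  rw [← sum_Ioc_consecutive _ (Nat.zero_le a) haN.le]
  have := hhead a
  have : A * (log N - log (a + 1)) ≤ A * (log k + (A / (a + 1) - 1)) := by gcongr; linarith
  linarith

lemma one_le_sum_Ioc_min_one_div {x : ℝ} {c u : ℕ} (hc : 0 < c) (hcu : c ≤ u) (hx : u ≤ x * c) :
    1 ≤ ∑ i ∈ Ioc (u - c) u, min 1 (x / i) := by
  have hcR : (0 : ℝ) < c := by exact_mod_cast hc
  have hterm : ∀ i ∈ Ioc (u - c) u, (c : ℝ)⁻¹ ≤ min 1 (x / i) := by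
    intro i hi
    have hi : (0 : ℝ) < i ∧ (i : ℝ) ≤ u := by
      rw [mem_Ioc] at hi
      exact ⟨by exact_mod_cast (Nat.zero_le _).trans_lt hi.1, by exact_mod_cast hi.2⟩
    refine le_min (inv_le_one_of_one_le₀ (by exact_mod_cast hc)) ?_
    rw [inv_eq_one_div, div_le_div_iff₀ hcR hi.1]
    linarith
  have := card_nsmul_le_sum _ _ _ hterm
  rw [Nat.card_Ioc, Nat.sub_sub_self hcu, nsmul_eq_mul, mul_inv_cancel₀ hcR.ne'] at this
  exact this

section Covering

variable {α β : Type*} [DecidableEq α]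

lemma exists_mem_card_mul_le_card_mul (ℬ : Finset β) (S : β → Finset α) {r : ℕ} (hr : 0 < r)
    {U : Finset α} (hU : U.Nonempty) (hdeg : ∀ a ∈ U, r ≤ #{b ∈ ℬ | a ∈ S b}) :
    ∃ b ∈ ℬ, #U * r ≤ #ℬ * #{a ∈ U | a ∈ S b} := by
  obtain ⟨a, ha⟩ := hU
  obtain ⟨b₀, hb₀⟩ : {b ∈ ℬ | a ∈ S b}.Nonempty := card_pos.mp (hr.trans_le (hdeg a ha))
  obtain ⟨b, hb, hmax⟩ :=
    ℬ.exists_max_image (fun b => #{a ∈ U | a ∈ S b}) ⟨b₀, (mem_filter.mp hb₀).1⟩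
  exact ⟨b, hb, card_nsmul_le_card_nsmul (r := fun a b => a ∈ S b) hdeg hmax⟩

theorem exists_cover_card_le_sum_min [DecidableEq β] (ℬ : Finset β) (S : β → Finset α) {r : ℕ}
    (hr : 0 < r) (U : Finset α) (hdeg : ∀ a ∈ U, r ≤ #{b ∈ ℬ | a ∈ S b}) :
    ∃ T ⊆ ℬ, (∀ a ∈ U, ∃ b ∈ T, a ∈ S b) ∧
      (#T : ℝ) ≤ ∑ i ∈ Ioc 0 #U, min 1 ((#ℬ / r : ℝ) / i) := by
  induction U using Finset.strongInduction with
  | H U ih =>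
    obtain rfl | hU := U.eq_empty_or_nonempty
    · exact ⟨∅, empty_subset _, by simp, by simp⟩
    obtain ⟨b, hb, hgood⟩ := exists_mem_card_mul_le_card_mul ℬ S hr hU hdeg
    set c := #{a ∈ U | a ∈ S b}
    have hsplit : c + #{a ∈ U | a ∉ S b} = #U := card_filter_add_card_filter_not _
    have hc : 0 < c := Nat.pos_of_ne_zero fun h => by
      rw [h, mul_zero] at hgood
      exact (Nat.mul_pos (card_pos.mpr hU) hr).ne' (Nat.le_zero.mp hgood)
    obtain ⟨a₀, ha₀⟩ := card_pos.mp hc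
    have hssub : {a ∈ U | a ∉ S b} ⊂ U :=
      filter_ssubset.mpr ⟨a₀, (mem_filter.mp ha₀).1, not_not.mpr (mem_filter.mp ha₀).2⟩
    obtain ⟨T, hTℬ, hTcov, hTcard⟩ := ih _ hssub fun a ha => hdeg a (mem_filter.mp ha).1
    refine ⟨insert b T, insert_subset hb hTℬ, fun a ha => ?_, ?_⟩
    · by_cases hab : a ∈ S b
      · exact ⟨b, mem_insert_self b T, hab⟩
      · obtain ⟨b', hb', hab'⟩ := hTcov a (mem_filter.mpr ⟨ha, hab⟩)
        exact ⟨b', mem_insert_of_mem hb', hab'⟩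
    -- The `c` points covered by `b` pay for it: the last `c` terms of the sum are each `≥ 1 / c`.
    · have hr' : (0 : ℝ) < r := by exact_mod_cast hr
      have hone := one_le_sum_Ioc_min_one_div (x := #ℬ / r) hc (hsplit ▸ Nat.le_add_right _ _) (by
        rw [div_mul_eq_mul_div, le_div_iff₀ hr']; exact_mod_cast hgood)
      rw [← sum_Ioc_consecutive _ (Nat.zero_le _) (Nat.sub_le #U c)]
      rw [← hsplit, Nat.add_sub_cancel_left] at hone ⊢
      have : (#(insert b T) : ℝ) ≤ #T + 1 := by exact_mod_cast card_insert_le b T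
      linarith

lemma card_sdiff_le_card_supersets {G W : Finset α} (hWG : W ⊆ G) :
    #(G \ W) ≤ #{D ∈ G.powersetCard (#W + 1) | W ⊆ D} := by
  refine card_le_card_of_injOn (fun x => insert x W) (fun x hx => ?_) ?_
  · obtain ⟨hxG, hxW⟩ := mem_sdiff.mp hx
    simp only [coe_filter, Set.mem_ofPred_eq, mem_powersetCard]
    exact ⟨⟨insert_subset hxG hWG, card_insert_of_notMem hxW⟩, subset_insert x W⟩
  · intro x hx y _ hxy
    exact (insert_inj (mem_sdiff.mp hx).2).mp hxy

theorem exists_covering_card_le {k : ℕ} (hk : 0 < k) (G : Finset α) (hkG : k ≤ #G) :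
    ∃ 𝒟 ⊆ G.powersetCard k, (∀ W ∈ G.powersetCard (k - 1), ∃ D ∈ 𝒟, W ⊆ D) ∧
      (#𝒟 : ℝ) ≤ ((#G).choose (k - 1) / k : ℝ) * (1 + log k) := by
  set r := #G - (k - 1)
  have hr : 0 < r := by omega
  have hdeg : ∀ W ∈ G.powersetCard (k - 1),
      r ≤ #{D ∈ G.powersetCard k | W ∈ D.powersetCard (k - 1)} := by
    intro W hW
    obtain ⟨hWG, hWk⟩ := mem_powersetCard.mp hW
    have := card_sdiff_le_card_supersets hWG
    rw [card_sdiff_of_subset hWG, hWk, Nat.sub_add_cancel hk] at this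
    convert this using 3
    simp [mem_powersetCard, hWk]
  obtain ⟨𝒟, h𝒟, hcov, hcard⟩ := exists_cover_card_le_sum_min _ _ hr _ hdeg
  refine ⟨𝒟, h𝒟, fun W hW => ?_, ?_⟩
  · obtain ⟨D, hD, hWD⟩ := hcov W hW
    exact ⟨D, hD, (mem_powersetCard.mp hWD).1⟩
  · have hkR : (0 : ℝ) < k := by exact_mod_cast hk
    have hrR : (0 : ℝ) < r := by exact_mod_cast hr
    have hchoose : ((#G).choose k * k : ℝ) = (#G).choose (k - 1) * r := by
      have := Nat.choose_succ_right_eq (#G) (k - 1)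
      rw [Nat.sub_add_cancel hk] at this
      exact_mod_cast this
    have hA : (#(G.powersetCard k) / r : ℝ) = (#G).choose (k - 1) / k := by
      rw [card_powersetCard, div_eq_div_iff hrR.ne' hkR.ne', hchoose]
    rw [hA, card_powersetCard] at hcard
    refine hcard.trans (sum_Ioc_min_one_div_le (by exact_mod_cast hk) ?_)
    rw [div_mul_cancel₀ _ hkR.ne']

def IsSingleHitting (k : ℕ) (G : Finset α) (𝒞 : Finset (Finset α)) : Prop :=
  ∀ X ⊆ G, X.Nonempty → k ≤ #(G \ X) → ∃ C ∈ 𝒞, #(C ∩ X) = 1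

lemma IsSingleHitting.union_image_insert {k : ℕ} {G : Finset α} {e : α} (he : e ∉ G)
    (hkG : k - 1 ≤ #G) {𝒞 𝒟 : Finset (Finset α)} (h𝒞 : IsSingleHitting k G 𝒞) (h𝒞G : ∀ C ∈ 𝒞, C ⊆ G)
    (h𝒟 : 𝒟 ⊆ G.powersetCard k) (hcov : ∀ W ∈ G.powersetCard (k - 1), ∃ D ∈ 𝒟, W ⊆ D) :
    IsSingleHitting k (insert e G) (𝒞 ∪ 𝒟.image (insert e)) := by
  intro X hXG hX hk
  have hnew : ∀ D ∈ 𝒟, insert e D ∈ 𝒞 ∪ 𝒟.image (insert e) :=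
    fun D hD => mem_union_right _ (mem_image_of_mem _ hD)
  by_cases heX : e ∈ X
  · obtain hX' | hX' := (X.erase e).eq_empty_or_nonempty
    · obtain ⟨W, hW⟩ := powersetCard_nonempty.mpr hkG
      obtain ⟨D, hD, -⟩ := hcov W hW
      refine ⟨insert e D, hnew D hD, ?_⟩
      rw [← insert_erase heX, hX', insert_empty, inter_singleton_of_mem (mem_insert_self e D),
        card_singleton]
    · have hdiff : insert e G \ X = G \ X.erase e := by
        ext x; by_cases hx : x = e <;> simp [hx, heX, he]
      obtain ⟨C, hC, hCX⟩ := h𝒞 (X.erase e) (subset_insert_iff.mp hXG) hX' (hdiff ▸ hk)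
      refine ⟨C, mem_union_left _ hC, ?_⟩
      rwa [← insert_erase heX, inter_insert_of_notMem fun h => he (h𝒞G C hC h)]
  · have hXG' : X ⊆ G := (subset_insert_iff_of_notMem heX).mp hXG
    rw [insert_sdiff_of_notMem _ heX, card_insert_of_notMem fun h => he (mem_sdiff.mp h).1] at hk
    by_cases hkX : k ≤ #(G \ X)
    · obtain ⟨C, hC, hCX⟩ := h𝒞 X hXG' hX hkX
      exact ⟨C, mem_union_left _ hC, hCX⟩
    -- `G \ X` is a `(k - 1)`-set, so a block `D ⊇ G \ X` of `𝒟` meets `X` in one point.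
    obtain ⟨D, hD, hWD⟩ := hcov (G \ X) (mem_powersetCard.mpr ⟨sdiff_subset, by omega⟩)
    obtain ⟨hDG, hDk⟩ := mem_powersetCard.mp (h𝒟 hD)
    refine ⟨insert e D, hnew D hD, ?_⟩
    have hDX : D \ X = G \ X :=
      (sdiff_subset_sdiff hDG le_rfl).antisymm (subset_sdiff.mpr ⟨hWD, sdiff_disjoint⟩)
    have := card_inter_add_card_sdiff D X
    rw [hDX] at this
    rw [insert_inter_of_notMem heX]
    omega

theorem exists_isSingleHitting_card_le {k : ℕ} (hk : 0 < k) (G : Finset α) (hkG : k + 1 ≤ #G) :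
    ∃ 𝒞 : Finset (Finset α), (∀ C ∈ 𝒞, C ⊆ G ∧ #C = k + 1) ∧ IsSingleHitting k G 𝒞 ∧
      (#𝒞 : ℝ) ≤ 1 + (1 + log k) / k * ((#G).choose k - (k + 1)) := by
  obtain ⟨m, hm, hGm⟩ : ∃ m, k + 1 ≤ m ∧ #G = m := ⟨_, hkG, rfl⟩
  induction m, hm using Nat.le_induction generalizing G with
  | base =>
    refine ⟨{G}, by simp [hGm], fun X hXG hX hk => ⟨G, mem_singleton_self G, ?_⟩, ?_⟩
    · have := card_sdiff_of_subset hXG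
      have := card_pos.mpr hX
      rw [inter_eq_right.mpr hXG]
      omega
    · simp [hGm, Nat.choose_succ_self_right]
  | succ m hm ih =>
    obtain ⟨e, he⟩ : G.Nonempty := card_pos.mp (by omega)
    have hG' : #(G.erase e) = m := by rw [card_erase_of_mem he, hGm, Nat.add_sub_cancel]
    obtain ⟨𝒞, h𝒞, hhit, hcard⟩ := ih (G.erase e) (by omega) hG'
    obtain ⟨𝒟, h𝒟, hcov, h𝒟card⟩ := exists_covering_card_le hk (G.erase e) (by omega)
    have hhit' := hhit.union_image_insert (notMem_erase e G) (by omega)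
      (fun C hC => (h𝒞 C hC).1) h𝒟 hcov
    rw [insert_erase he] at hhit'
    refine ⟨𝒞 ∪ 𝒟.image (insert e), ?_, hhit', ?_⟩
    · simp only [mem_union, mem_image]
      rintro C (hC | ⟨D, hD, rfl⟩)
      · exact ⟨(h𝒞 C hC).1.trans (erase_subset e G), (h𝒞 C hC).2⟩
      · obtain ⟨hDG, hDk⟩ := mem_powersetCard.mp (h𝒟 hD)
        refine ⟨insert_subset he (hDG.trans (erase_subset e G)), ?_⟩
        rw [card_insert_of_notMem fun h => notMem_erase e G (hDG h), hDk]
    · have hunion : (#(𝒞 ∪ 𝒟.image (insert e)) : ℝ) ≤ #𝒞 + #𝒟 := by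
        exact_mod_cast (card_union_le _ _).trans (Nat.add_le_add_left card_image_le _)
      have hpascal : ((#G).choose k : ℝ) = m.choose k + m.choose (k - 1) := by
        rw [hGm, Nat.choose_succ_left _ _ hk]; push_cast; ring
      rw [hpascal]
      rw [hG'] at hcard h𝒟card
      calc _ ≤ _ := hunion
        _ ≤ _ := add_le_add hcard h𝒟card
        _ = _ := by ring

end Covering

lemma isSESystem_image_compl {n k : ℕ} (hkn : k < n) {𝒞 : Finset (Finset (Fin n))}
    (h𝒞 : ∀ C ∈ 𝒞, #C = k + 1) (hhit : IsSingleHitting k univ 𝒞) :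
    IsSESystem n (n - k - 1) (𝒞.image compl) := by
  refine ⟨?_, fun X hX1 hXt => ?_⟩
  · simp only [mem_image, forall_exists_index, and_imp]
    rintro _ C hC rfl
    rw [card_compl, Fintype.card_fin, h𝒞 C hC, Nat.sub_sub]
  · obtain ⟨C, hC, hCX⟩ := hhit X (subset_univ X) (card_pos.mp hX1)
      (by rw [← compl_eq_univ_sdiff, card_compl, Fintype.card_fin]; omega)
    exact ⟨Cᶜ, mem_image_of_mem _ hC, by rwa [sdiff_compl, inf_comm]⟩

lemma SENumber_le_card {n t : ℕ} {S : Finset (Finset (Fin n))} (hS : IsSESystem n t S) :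
    SENumber n t ≤ #S :=
  Nat.sInf_le ⟨S, hS, rfl⟩

theorem stmt10 (n k : ℕ) (hk : 0 < k) (hkn : k + 1 < n) :
    (SENumber n (n - k - 1) : ℝ) ≤
      ((1 + Real.log k) / (k : ℝ)) * ((n.choose k : ℝ) - 1) := by
  obtain ⟨𝒞, h𝒞, hhit, hcard⟩ := exists_isSingleHitting_card_le hk (univ : Finset (Fin n))
    (by rw [card_univ, Fintype.card_fin]; omega)
  have hSE := isSESystem_image_compl (by omega) (fun C hC => (h𝒞 C hC).2) hhit
  have hck : 1 ≤ (1 + log k) / k * k := by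
    rw [div_mul_cancel₀ _ (by positivity)]
    linarith [log_nonneg (Nat.one_le_cast.mpr hk)]
  rw [card_univ, Fintype.card_fin] at hcard
  calc (SENumber n (n - k - 1) : ℝ) ≤ #(𝒞.image compl) := mod_cast SENumber_le_card hSE
    _ ≤ #𝒞 := by exact_mod_cast card_image_le
    _ ≤ 1 + (1 + log k) / k * (n.choose k - (k + 1)) := hcard
    _ ≤ (1 + log k) / k * (n.choose k - 1) := by linarith
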